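/- arXiv:2411.03317 — 6 statements merged into one kernel-verified Lean document; each statement's English description precedes it below -/
import Mathlib

section
/- Assume s^{g(s)} + λ ≠ 0 for every s ∈ ℂ ∖ {0, −c}. Then the integrals of ũ(s)·e^{s t} over the two circular arcs of radius R in the left half-plane vanish as R → ∞: lim_{R→∞} ∫_{π/2}^{π} ũ(R e^{iθ}) e^{R e^{iθ} t} · i R e^{iθ} dθ = 0 and lim_{R→∞} ∫_{−π}^{−π/2} ũ(R e^{iθ}) e^{R e^{iθ} t} · i R e^{iθ} dθ = 0 (the integrand being defined for almost every θ; R ranges over positive reals with R ≠ c). -/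
open MeasureTheory Filter Set

/-- `g(s) = s·A(s) = (α₁ s + α₂ c)/(s + c)`, where `A` is the Laplace transform of the
exponential transition function `α(t) = α₂ + (α₁ - α₂)e^{-c t}`. -/
noncomputable def gfun (α₁ α₂ c : ℝ) (s : ℂ) : ℂ := ((α₁ : ℂ) * s + (α₂ : ℂ) * c) / (s + c)

/-- The Laplace-domain solution `ũ(s) = s^{g(s)-1}/(s^{g(s)} + λ)` (principal powers) of the
Scarpi relaxation equation with exponential transition function and `u₀ = 1`. -/
noncomputable def utilde (α₁ α₂ c lam : ℝ) (s : ℂ) : ℂ :=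
  s ^ (gfun α₁ α₂ c s - 1) / (s ^ gfun α₁ α₂ c s + (lam : ℂ))

/-- `h(ρ) = (α₁ ρ - α₂ c)/(c - ρ)`; note `g(-ρ) = -h(ρ)`. -/
noncomputable def hfun (α₁ α₂ c : ℝ) (ρ : ℝ) : ℝ := (α₁ * ρ - α₂ * c) / (c - ρ)

/-! Since `g(s) → α₁ > 0` as `|s| → ∞`, `|s^{g(s)}|` grows like a positive power of `|s|`, so
`|ũ(s)| ≤ 2/|s|` for large `|s|`. On the arc of radius `R` the integrand is then bounded by
`2 e^{R t cos θ}`, and `cos θ < 0` inside the arc, so the integrals tend to `0` by dominated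
convergence. -/

open Topology Bornology

theorem tendsto_mul_add_div_add_cobounded {𝕜 : Type*} [NormedField 𝕜] (a b d : 𝕜) :
    Tendsto (fun s => (a * s + b) / (s + d)) (cobounded 𝕜) (𝓝 a) := by
  have hinv : Tendsto (fun s => (s + d)⁻¹) (cobounded 𝕜) (𝓝 0) :=
    tendsto_inv₀_cobounded.comp (tendsto_add_const_cobounded d)
  have hne : ∀ᶠ s in cobounded 𝕜, s + d ≠ 0 :=
    (tendsto_add_const_cobounded d).eventually (eventually_ne_cobounded 0)
  refine (by simpa using tendsto_const_nhds.add (hinv.const_mul (b - a * d)) :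
    Tendsto (fun s => a + (b - a * d) * (s + d)⁻¹) _ (𝓝 a)).congr' ?_
  filter_upwards [hne] with s hs
  field_simp
  ring

theorem rpow_mul_exp_le_norm_cpow {s w : ℂ} {σ τ : ℝ} (hs : 1 ≤ ‖s‖) (hre : σ ≤ w.re)
    (him : |w.im| ≤ τ) : ‖s‖ ^ σ * Real.exp (-(Real.pi * τ)) ≤ ‖s ^ w‖ := by
  have hs0 : s ≠ 0 := norm_pos_iff.1 (by linarith)
  have harg : Complex.arg s * w.im ≤ Real.pi * τ :=
    calc Complex.arg s * w.im ≤ |Complex.arg s| * |w.im| := by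
          rw [← abs_mul]; exact le_abs_self _
      _ ≤ Real.pi * τ :=
          mul_le_mul (Complex.abs_arg_le_pi s) him (abs_nonneg _) Real.pi_pos.le
  rw [Complex.norm_cpow_of_ne_zero hs0, Real.exp_neg, ← div_eq_mul_inv]
  exact div_le_div₀ (by positivity) (Real.rpow_le_rpow_of_exponent_le hs hre) (Real.exp_pos _)
    (Real.exp_le_exp.2 harg)

theorem tendsto_norm_cpow_cobounded_atTop {g : ℂ → ℂ} {w : ℂ} (hw : 0 < w.re)
    (hg : Tendsto g (cobounded ℂ) (𝓝 w)) :
    Tendsto (fun s => ‖s ^ g s‖) (cobounded ℂ) atTop := by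
  have hre : ∀ᶠ s in cobounded ℂ, w.re / 2 ≤ (g s).re :=
    (Complex.continuous_re.tendsto w).comp hg |>.eventually (eventually_ge_nhds (by linarith))
  have him : ∀ᶠ s in cobounded ℂ, |(g s).im| ≤ |w.im| + 1 :=
    (continuous_abs.comp Complex.continuous_im).tendsto w |>.comp hg
      |>.eventually (eventually_le_nhds (by simp))
  have hlower : Tendsto (fun s : ℂ => ‖s‖ ^ (w.re / 2) * Real.exp (-(Real.pi * (|w.im| + 1))))
      (cobounded ℂ) atTop :=
    ((tendsto_rpow_atTop (by linarith)).comp tendsto_norm_cobounded_atTop).atTop_mul_const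
      (Real.exp_pos _)
  refine tendsto_atTop_mono' _ ?_ hlower
  filter_upwards [hre, him, eventually_cobounded_le_norm 1] with s hs_re hs_im hs
  exact rpow_mul_exp_le_norm_cpow hs hs_re hs_im

theorem norm_cpow_sub_one_div_cpow_add_le {s w μ : ℂ} (hs : s ≠ 0) (hμ : 2 * ‖μ‖ ≤ ‖s ^ w‖) :
    ‖s ^ (w - 1) / (s ^ w + μ)‖ ≤ 2 / ‖s‖ := by
  have hden : ‖s ^ w‖ ≤ 2 * ‖s ^ w + μ‖ := by
    have := norm_sub_le (s ^ w + μ) μ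
    rw [add_sub_cancel_right] at this
    linarith
  rw [Complex.cpow_sub _ _ hs, Complex.cpow_one, norm_div, norm_div, div_right_comm]
  exact div_le_div_of_nonneg_right (div_le_of_le_mul₀ (norm_nonneg _) zero_le_two hden)
    (norm_nonneg _)

theorem tendsto_intervalIntegral_exp_mul_atTop {f : ℝ → ℝ} {a b : ℝ} (hf : Measurable f)
    (hab : a ≤ b) (hneg : ∀ x ∈ Ioo a b, f x < 0) :
    Tendsto (fun R : ℝ => ∫ x in a..b, Real.exp (R * f x)) atTop (𝓝 0) := by
  simp only [intervalIntegral.integral_of_le hab, integral_Ioc_eq_integral_Ioo]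
  have hlim : Tendsto (fun R : ℝ => ∫ x in Ioo a b, Real.exp (R * f x)) atTop
      (𝓝 (∫ x in Ioo a b, (0 : ℝ))) := by
    refine tendsto_integral_filter_of_dominated_convergence (fun _ => (1 : ℝ))
      (.of_forall fun R => ((hf.const_mul R).exp).aestronglyMeasurable) ?_
      (integrableOn_const measure_Ioo_lt_top.ne) ?_
    · filter_upwards [eventually_ge_atTop 0] with R hR
      filter_upwards [ae_restrict_mem measurableSet_Ioo] with x hx
      rw [Real.norm_of_nonneg (Real.exp_pos _).le, Real.exp_le_one_iff]
      exact mul_nonpos_of_nonneg_of_nonpos hR (hneg x hx).le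
    · filter_upwards [ae_restrict_mem measurableSet_Ioo] with x hx
      exact Real.tendsto_exp_atBot.comp (tendsto_id.atTop_mul_const_of_neg (hneg x hx))
  simpa using hlim

theorem tendsto_arc_integral_atTop {u : ℂ → ℂ} {C t a b : ℝ} (ht : 0 < t)
    (hu : ∀ᶠ s in cobounded ℂ, ‖u s‖ ≤ C / ‖s‖) (hab : a ≤ b)
    (hcos : ∀ θ ∈ Ioo a b, Real.cos θ < 0) :
    Tendsto (fun R : ℝ => ∫ θ in a..b,
        u ((R : ℂ) * Complex.exp ((θ : ℂ) * Complex.I)) *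
          Complex.exp ((R : ℂ) * Complex.exp ((θ : ℂ) * Complex.I) * (t : ℂ)) *
          (Complex.I * (R : ℂ) * Complex.exp ((θ : ℂ) * Complex.I))) atTop (𝓝 0) := by
  have hu' : ∀ᶠ R in atTop, ∀ s : ℂ, ‖s‖ = R → ‖u s‖ ≤ C / R := by
    rw [← comap_norm_atTop, eventually_comap] at hu
    filter_upwards [hu] with R hR s hs
    exact hs ▸ hR s hs
  have hlim : Tendsto (fun R : ℝ => |∫ θ in a..b, C * Real.exp (R * (t * Real.cos θ))|)
      atTop (𝓝 0) := by
    have := ((tendsto_intervalIntegral_exp_mul_atTop (by fun_prop) hab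
      fun θ hθ => mul_neg_of_pos_of_neg ht (hcos θ hθ)).const_mul C).abs
    simpa [intervalIntegral.integral_const_mul] using this
  refine squeeze_zero_norm' ?_ hlim
  filter_upwards [hu', eventually_gt_atTop 0] with R hR hRpos
  refine intervalIntegral.norm_integral_le_abs_of_norm_le (.of_forall fun θ => ?_)
    ((by fun_prop : Continuous fun θ => C * Real.exp (R * (t * Real.cos θ))).intervalIntegrable _ _)
  have hnorm : ‖(R : ℂ) * Complex.exp ((θ : ℂ) * Complex.I)‖ = R := by
    simp [Complex.norm_exp_ofReal_mul_I, hRpos.le]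
  have hexp : ‖Complex.exp ((R : ℂ) * Complex.exp ((θ : ℂ) * Complex.I) * (t : ℂ))‖ =
      Real.exp (R * (t * Real.cos θ)) := by
    rw [Complex.norm_exp]
    simp only [Complex.mul_re, Complex.ofReal_re, Complex.exp_ofReal_mul_I_re, Complex.ofReal_im,
      Complex.exp_ofReal_mul_I_im, zero_mul, sub_zero, Complex.mul_im, add_zero, mul_zero,
      Real.exp_eq_exp]
    ring
  rw [norm_mul, norm_mul, hexp, mul_assoc Complex.I, norm_mul, Complex.norm_I, one_mul, hnorm]
  calc ‖u _‖ * Real.exp (R * (t * Real.cos θ)) * R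
      ≤ C / R * Real.exp (R * (t * Real.cos θ)) * R := by
        gcongr; exact hR _ hnorm
    _ = C * Real.exp (R * (t * Real.cos θ)) := by field_simp

theorem eventually_norm_utilde_le (α₁ α₂ c lam : ℝ) (h0 : 0 < α₁) :
    ∀ᶠ s in cobounded ℂ, ‖utilde α₁ α₂ c lam s‖ ≤ 2 / ‖s‖ := by
  have hpow := tendsto_norm_cpow_cobounded_atTop (g := gfun α₁ α₂ c) (w := α₁)
    (by simpa using h0) (tendsto_mul_add_div_add_cobounded _ _ _)
  filter_upwards [hpow.eventually_ge_atTop (2 * ‖(lam : ℂ)‖), eventually_ne_cobounded 0]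
    with s hs hs0
  exact norm_cpow_sub_one_div_cpow_add_le hs0 hs

theorem arc_integrals_vanish_general
    (α₁ α₂ c lam t : ℝ) (h0 : 0 < α₁)
    (ht : 0 < t) :
    Tendsto (fun R : ℝ => ∫ θ in (Real.pi / 2)..Real.pi,
        utilde α₁ α₂ c lam ((R : ℂ) * Complex.exp ((θ : ℂ) * Complex.I)) *
          Complex.exp ((R : ℂ) * Complex.exp ((θ : ℂ) * Complex.I) * (t : ℂ)) *
          (Complex.I * (R : ℂ) * Complex.exp ((θ : ℂ) * Complex.I)))
      atTop (nhds 0) ∧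
    Tendsto (fun R : ℝ => ∫ θ in (-Real.pi)..(-(Real.pi / 2)),
        utilde α₁ α₂ c lam ((R : ℂ) * Complex.exp ((θ : ℂ) * Complex.I)) *
          Complex.exp ((R : ℂ) * Complex.exp ((θ : ℂ) * Complex.I) * (t : ℂ)) *
          (Complex.I * (R : ℂ) * Complex.exp ((θ : ℂ) * Complex.I)))
      atTop (nhds 0) := by
  have hu := eventually_norm_utilde_le α₁ α₂ c lam h0
  have hπ := Real.pi_pos
  refine ⟨tendsto_arc_integral_atTop ht hu (by linarith) fun θ hθ => ?_,
    tendsto_arc_integral_atTop ht hu (by linarith) fun θ hθ => ?_⟩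
  · exact Real.cos_neg_of_pi_div_two_lt_of_lt hθ.1 (by linarith [hθ.2])
  · rw [← Real.cos_neg]
    exact Real.cos_neg_of_pi_div_two_lt_of_lt (by linarith [hθ.2]) (by linarith [hθ.1])

/-- The integrals of `ũ(s)·e^{s t}` over the two circular arcs of radius `R` in the left
half-plane vanish as `R → ∞`. -/
theorem arc_integrals_vanish
    (α₁ α₂ c lam t : ℝ) (h0 : 0 < α₁) (h12 : α₁ < α₂) (h21 : α₂ < 1)
    (hc : 0 < c) (hlam : 0 < lam) (ht : 0 < t)
    (hnz : ∀ s : ℂ, s ≠ 0 → s ≠ -(c : ℂ) → s ^ gfun α₁ α₂ c s + (lam : ℂ) ≠ 0) :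
    Tendsto (fun R : ℝ => ∫ θ in (Real.pi / 2)..Real.pi,
        utilde α₁ α₂ c lam ((R : ℂ) * Complex.exp ((θ : ℂ) * Complex.I)) *
          Complex.exp ((R : ℂ) * Complex.exp ((θ : ℂ) * Complex.I) * (t : ℂ)) *
          (Complex.I * (R : ℂ) * Complex.exp ((θ : ℂ) * Complex.I)))
      atTop (nhds 0) ∧
    Tendsto (fun R : ℝ => ∫ θ in (-Real.pi)..(-(Real.pi / 2)),
        utilde α₁ α₂ c lam ((R : ℂ) * Complex.exp ((θ : ℂ) * Complex.I)) *
          Complex.exp ((R : ℂ) * Complex.exp ((θ : ℂ) * Complex.I) * (t : ℂ)) *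
          (Complex.I * (R : ℂ) * Complex.exp ((θ : ℂ) * Complex.I)))
      atTop (nhds 0) :=
  arc_integrals_vanish_general α₁ α₂ c lam t h0 ht
end

section
/- Fix s₀ > 0 and assume s^{g(s)} + λ ≠ 0 for every s ∈ ℂ ∖ {0, −c}. Then the integrals of ũ(s)·e^{s t} over the horizontal segments at height ±R joining the Bromwich line to the imaginary axis vanish as R → ∞: lim_{R→∞} ∫₀^{s₀} ũ(x + iR) e^{(x + iR) t} dx = 0 and lim_{R→∞} ∫₀^{s₀} ũ(x − iR) e^{(x − iR) t} dx = 0. -/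
open MeasureTheory Filter Set

/-
For `Re s ≥ 0` write `g(s) = α₁ + (α₂ - α₁) c / (s + c)`: the second term has nonnegative real
part and modulus at most `α₂ - α₁`, so `α₁ ≤ Re g(s) ≤ α₂` and `|Im g(s)| ≤ α₂ - α₁`. Since
`|s^w| = |s|^{Re w} e^{-arg s · Im w}` and `|arg s| ≤ π`, this gives `|s^{g(s)-1}| ≲ |s|^{α₂-1}` and
`|s^{g(s)}| ≳ |s|^{α₁}`, hence `|ũ(s)| ≲ |s|^{α₂-α₁-1}` once `|s|^{α₁}` dominates `λ`. On the
segments `|s| ≥ R` and `|e^{st}| ≤ e^{s₀ t}`, so both integrals are `O(R^{α₂-α₁-1})` with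
`α₂ - α₁ - 1 < 0`.
-/

open Real

section Gfun

variable {α₁ α₂ c : ℝ} {s : ℂ}

lemma gfun_sub_eq (hs : s + c ≠ 0) :
    gfun α₁ α₂ c s - α₁ = ((α₂ - α₁) * c : ℝ) / (s + c) := by
  unfold gfun
  field_simp
  push_cast
  ring

lemma norm_gfun_sub_le (hc : 0 < c) (hs : 0 ≤ s.re) :
    ‖gfun α₁ α₂ c s - α₁‖ ≤ |α₂ - α₁| := by
  have hsc : c ≤ ‖s + c‖ := (by simpa using hs : c ≤ (s + c).re).trans (Complex.re_le_norm _)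
  have hpos : 0 < ‖s + c‖ := hc.trans_le hsc
  rw [gfun_sub_eq (norm_pos_iff.1 hpos), norm_div, Complex.norm_real, Real.norm_eq_abs,
    abs_mul, abs_of_pos hc, div_le_iff₀ hpos]
  exact mul_le_mul_of_nonneg_left hsc (abs_nonneg _)

lemma le_re_gfun (hc : 0 < c) (h12 : α₁ ≤ α₂) (hs : 0 ≤ s.re) :
    α₁ ≤ (gfun α₁ α₂ c s).re := by
  have hre : 0 < (s + c).re := by simp only [Complex.add_re, Complex.ofReal_re]; linarith
  have hsc : s + c ≠ 0 := fun h => by simp [h] at hre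
  have key : 0 ≤ ((((α₂ - α₁) * c : ℝ) : ℂ) / (s + c)).re := by
    rw [Complex.div_re]
    simp only [Complex.ofReal_re, Complex.ofReal_im, zero_mul, zero_div, add_zero]
    exact div_nonneg (mul_nonneg (mul_nonneg (by linarith) hc.le) hre.le) (Complex.normSq_nonneg _)
  rw [← gfun_sub_eq hsc] at key
  simpa using key

end Gfun

section Cpow

variable {s w : ℂ} {a : ℝ}

lemma abs_arg_mul_im_le (s w : ℂ) : |s.arg * w.im| ≤ π * |w.im| := by
  rw [abs_mul]
  exact mul_le_mul_of_nonneg_right (Complex.abs_arg_le_pi s) (abs_nonneg _)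

lemma norm_cpow_le_rpow_mul_exp (hs : 1 ≤ ‖s‖) (hw : w.re ≤ a) :
    ‖s ^ w‖ ≤ ‖s‖ ^ a * exp (π * |w.im|) := by
  rw [Complex.norm_cpow_of_ne_zero (norm_pos_iff.1 (one_pos.trans_le hs)), div_eq_mul_inv,
    ← Real.exp_neg]
  gcongr
  exact (neg_le_abs _).trans (abs_arg_mul_im_le s w)

lemma rpow_div_exp_le_norm_cpow (hs : 1 ≤ ‖s‖) (hw : a ≤ w.re) :
    ‖s‖ ^ a / exp (π * |w.im|) ≤ ‖s ^ w‖ := by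
  rw [Complex.norm_cpow_of_ne_zero (norm_pos_iff.1 (one_pos.trans_le hs))]
  gcongr ?_ / exp ?_
  · exact Real.rpow_le_rpow_of_exponent_le hs hw
  · exact (le_abs_self _).trans (abs_arg_mul_im_le s w)

end Cpow

section Utilde

variable {α₁ α₂ c lam : ℝ}

lemma norm_utilde_le (hc : 0 < c) (h12 : α₁ ≤ α₂) {s : ℂ} (hs : 0 ≤ s.re) (hs1 : 1 ≤ ‖s‖)
    (hlarge : 2 * exp (π * (α₂ - α₁)) * |lam| ≤ ‖s‖ ^ α₁) :
    ‖utilde α₁ α₂ c lam s‖ ≤ 2 * exp (π * (α₂ - α₁)) ^ 2 * ‖s‖ ^ (α₂ - α₁ - 1) := by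
  set w := gfun α₁ α₂ c s
  set E := exp (π * (α₂ - α₁))
  have hw : ‖w - α₁‖ ≤ α₂ - α₁ := abs_of_nonneg (sub_nonneg.2 h12) ▸ norm_gfun_sub_le hc hs
  have hre : w.re ≤ α₂ := by
    have := (Complex.re_le_norm _).trans hw
    simp only [Complex.sub_re, Complex.ofReal_re] at this
    linarith
  have him : exp (π * |w.im|) ≤ E := by
    have := (Complex.abs_im_le_norm _).trans hw
    simp only [Complex.sub_im, Complex.ofReal_im, sub_zero] at this
    exact exp_le_exp.2 (mul_le_mul_of_nonneg_left this pi_pos.le)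
  have hnum : ‖s ^ (w - 1)‖ ≤ ‖s‖ ^ (α₂ - 1) * E :=
    calc ‖s ^ (w - 1)‖ ≤ ‖s‖ ^ (α₂ - 1) * exp (π * |(w - 1).im|) :=
          norm_cpow_le_rpow_mul_exp hs1 (by simp only [Complex.sub_re, Complex.one_re]; linarith)
      _ ≤ ‖s‖ ^ (α₂ - 1) * E := by rw [Complex.sub_im, Complex.one_im, sub_zero]; gcongr
  have hpow : ‖s‖ ^ α₁ / E ≤ ‖s ^ w‖ :=
    calc ‖s‖ ^ α₁ / E ≤ ‖s‖ ^ α₁ / exp (π * |w.im|) := by gcongr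
      _ ≤ ‖s ^ w‖ := rpow_div_exp_le_norm_cpow hs1 (le_re_gfun hc h12 hs)
  have hden : ‖s‖ ^ α₁ / (2 * E) ≤ ‖s ^ w + lam‖ := by
    have htri := norm_sub_norm_le (s ^ w) (-(lam : ℂ))
    rw [sub_neg_eq_add, norm_neg, Complex.norm_real, Real.norm_eq_abs] at htri
    have hlam : |lam| ≤ ‖s‖ ^ α₁ / (2 * E) := by
      rw [le_div_iff₀ (by positivity), mul_comm]; exact hlarge
    have : ‖s‖ ^ α₁ / E = 2 * (‖s‖ ^ α₁ / (2 * E)) := by field_simp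
    linarith
  have hs0 : 0 < ‖s‖ := one_pos.trans_le hs1
  calc ‖utilde α₁ α₂ c lam s‖ = ‖s ^ (w - 1)‖ / ‖s ^ w + lam‖ := norm_div _ _
    _ ≤ ‖s‖ ^ (α₂ - 1) * E / (‖s‖ ^ α₁ / (2 * E)) := by gcongr
    _ = 2 * E ^ 2 * ‖s‖ ^ (α₂ - α₁ - 1) := by
      rw [show α₂ - α₁ - 1 = (α₂ - 1) - α₁ by ring, Real.rpow_sub hs0 (α₂ - 1) α₁]
      field_simp

end Utilde

lemma eventually_norm_utilde_le_s6 {α₁ α₂ c : ℝ} (lam : ℝ) (h0 : 0 < α₁) (h12 : α₁ ≤ α₂)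
    (hδ : α₂ - α₁ ≤ 1) (hc : 0 < c) :
    ∀ᶠ R in atTop, ∀ s : ℂ, 0 ≤ s.re → R ≤ ‖s‖ →
      ‖utilde α₁ α₂ c lam s‖ ≤ 2 * exp (π * (α₂ - α₁)) ^ 2 * R ^ (α₂ - α₁ - 1) := by
  filter_upwards [eventually_ge_atTop 1,
    (tendsto_rpow_atTop h0).eventually_ge_atTop (2 * exp (π * (α₂ - α₁)) * |lam|)]
    with R hR1 hRlarge s hs hRs
  have hR0 : 0 < R := one_pos.trans_le hR1
  refine (norm_utilde_le hc h12 hs (hR1.trans hRs)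
    (hRlarge.trans (rpow_le_rpow hR0.le hRs h0.le))).trans ?_
  exact mul_le_mul_of_nonneg_left (rpow_le_rpow_of_nonpos hR0 hRs (by linarith)) (by positivity)

lemma tendsto_integral_segment_of_norm_le {f : ℂ → ℂ} {B : ℝ → ℝ} {t s₀ : ℝ} (ht : 0 ≤ t)
    (hs₀ : 0 ≤ s₀) (hB : Tendsto B atTop (nhds 0))
    (hf : ∀ᶠ R in atTop, ∀ s : ℂ, 0 ≤ s.re → R ≤ ‖s‖ → ‖f s‖ ≤ B R)
    {γ : ℝ → ℝ → ℂ} (hγ_re : ∀ x R, (γ x R).re = x) (hγ_norm : ∀ x R, R ≤ ‖γ x R‖) :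
    Tendsto (fun R => ∫ x in (0 : ℝ)..s₀, f (γ x R) * Complex.exp (γ x R * t))
      atTop (nhds 0) := by
  have hlim : Tendsto (fun R => B R * exp (s₀ * t) * |s₀ - 0|) atTop (nhds 0) := by
    simpa using (hB.mul_const (exp (s₀ * t))).mul_const |s₀ - 0|
  refine squeeze_zero_norm' ?_ hlim
  filter_upwards [hf] with R hR
  refine intervalIntegral.norm_integral_le_of_norm_le_const fun x hx => ?_
  rw [Set.uIoc_of_le hs₀] at hx
  have hfx : ‖f (γ x R)‖ ≤ B R := hR _ (by rw [hγ_re]; exact hx.1.le) (hγ_norm x R)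
  have hexp : ‖Complex.exp (γ x R * t)‖ ≤ exp (s₀ * t) := by
    rw [Complex.norm_exp, Complex.re_mul_ofReal, hγ_re]
    exact exp_le_exp.2 (mul_le_mul_of_nonneg_right hx.2 ht)
  rw [norm_mul]
  exact mul_le_mul hfx hexp (norm_nonneg _) ((norm_nonneg _).trans hfx)

theorem horizontal_segments_vanish_general
    (α₁ α₂ c lam t s₀ : ℝ) (h0 : 0 < α₁) (h12 : α₁ < α₂) (h21 : α₂ < 1)
    (hc : 0 < c) (ht : 0 < t) (hs₀ : 0 < s₀) :
    Tendsto (fun R : ℝ => ∫ x in (0 : ℝ)..s₀,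
        utilde α₁ α₂ c lam ((x : ℂ) + (R : ℂ) * Complex.I) *
          Complex.exp (((x : ℂ) + (R : ℂ) * Complex.I) * (t : ℂ)))
      atTop (nhds 0) ∧
    Tendsto (fun R : ℝ => ∫ x in (0 : ℝ)..s₀,
        utilde α₁ α₂ c lam ((x : ℂ) - (R : ℂ) * Complex.I) *
          Complex.exp (((x : ℂ) - (R : ℂ) * Complex.I) * (t : ℂ)))
      atTop (nhds 0) := by
  have hdecay : α₂ - α₁ - 1 < 0 := by linarith
  have hB : Tendsto (fun R : ℝ => 2 * exp (π * (α₂ - α₁)) ^ 2 * R ^ (α₂ - α₁ - 1))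
      atTop (nhds 0) := by
    simpa using (tendsto_rpow_neg_atTop (neg_pos.2 hdecay)).const_mul (2 * exp (π * (α₂ - α₁)) ^ 2)
  have hbound := eventually_norm_utilde_le_s6 lam h0 h12.le (by linarith) hc
  constructor
  · exact tendsto_integral_segment_of_norm_le ht.le hs₀.le hB hbound (fun x R => by simp)
      fun x R => (le_abs_self R).trans
        (by simpa using Complex.abs_im_le_norm ((x : ℂ) + R * Complex.I))
  · exact tendsto_integral_segment_of_norm_le ht.le hs₀.le hB hbound (fun x R => by simp)
      fun x R => (le_abs_self R).trans
        (by simpa using Complex.abs_im_le_norm ((x : ℂ) - R * Complex.I))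

/-- The integrals of `ũ(s)·e^{s t}` over the horizontal segments at height `±R` joining the
Bromwich line `Re s = s₀` to the imaginary axis vanish as `R → ∞`. -/
theorem horizontal_segments_vanish
    (α₁ α₂ c lam t s₀ : ℝ) (h0 : 0 < α₁) (h12 : α₁ < α₂) (h21 : α₂ < 1)
    (hc : 0 < c) (hlam : 0 < lam) (ht : 0 < t) (hs₀ : 0 < s₀)
    (hnz : ∀ s : ℂ, s ≠ 0 → s ≠ -(c : ℂ) → s ^ gfun α₁ α₂ c s + (lam : ℂ) ≠ 0) :
    Tendsto (fun R : ℝ => ∫ x in (0 : ℝ)..s₀,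
        utilde α₁ α₂ c lam ((x : ℂ) + (R : ℂ) * Complex.I) *
          Complex.exp (((x : ℂ) + (R : ℂ) * Complex.I) * (t : ℂ)))
      atTop (nhds 0) ∧
    Tendsto (fun R : ℝ => ∫ x in (0 : ℝ)..s₀,
        utilde α₁ α₂ c lam ((x : ℂ) - (R : ℂ) * Complex.I) *
          Complex.exp (((x : ℂ) - (R : ℂ) * Complex.I) * (t : ℂ)))
      atTop (nhds 0) :=
  horizontal_segments_vanish_general α₁ α₂ c lam t s₀ h0 h12 h21 hc ht hs₀
end

section
/- Assume s^{g(s)} + λ ≠ 0 for every s ∈ ℂ ∖ {0, −c}. Then the integral of ũ(s)·e^{s t} over the small circle of radius ε around the origin vanishes as ε → 0⁺: lim_{ε→0⁺} ∫_{−π}^{π} ũ(ε e^{iθ}) e^{ε e^{iθ} t} · i ε e^{iθ} dθ = 0. -/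
open MeasureTheory Filter Set

/-!
On the circle `s = ε e^{iθ}` the integrand is `i · s ũ(s) · e^{s t}`, and
`s ũ(s) = s^{g(s)} / (s^{g(s)} + λ)`. Since `g(s) → g(0) = α₂` and `α₂ > 0`, joint continuity
of `(z, w) ↦ z ^ w` at `(0, α₂)` gives `s^{g(s)} → 0`, so the integrand tends to `0`
uniformly in `θ`.
-/

open Complex

theorem tendsto_cpow_of_tendsto_re_pos {g : ℂ → ℂ} {a : ℂ} (hg : Tendsto g (nhds 0) (nhds a))
    (ha : 0 < a.re) : Tendsto (fun s => s ^ g s) (nhds 0) (nhds 0) := by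
  have h := (continuousAt_cpow_zero_of_re_pos ha).tendsto.comp (tendsto_id.prodMk_nhds hg)
  rwa [zero_cpow (ne_of_apply_ne re ha.ne')] at h

theorem tendsto_intervalIntegral_circle_of_tendsto_mul {f : ℂ → ℂ}
    (hf : Tendsto (fun s => s * f s) (nhdsWithin 0 {0}ᶜ) (nhds 0)) (a b : ℝ) :
    Tendsto (fun ε : ℝ => ∫ θ in a..b,
        f (ε * exp (θ * I)) * (I * ε * exp (θ * I))) (nhdsWithin 0 (Ioi 0)) (nhds 0) := by
  rw [Metric.tendsto_nhds]
  intro η hη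
  set η' := η / (|b - a| + 1)
  obtain ⟨δ, hδ, hsmall⟩ := Metric.eventually_nhds_iff.1
    (eventually_nhdsWithin_iff.1 (Metric.tendsto_nhds.1 hf η' (by positivity)))
  filter_upwards [Ioo_mem_nhdsGT hδ] with ε ⟨hε, hεδ⟩
  have hbound : ∀ θ ∈ uIoc a b, ‖f (ε * exp (θ * I)) * (I * ε * exp (θ * I))‖ ≤ η' := by
    intro θ _
    have hs : ‖(ε : ℂ) * exp (θ * I)‖ = ε := by
      rw [norm_mul, norm_exp_ofReal_mul_I, norm_real, Real.norm_of_nonneg hε.le, mul_one]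
    have hne : (ε : ℂ) * exp (θ * I) ≠ 0 := by
      rw [← norm_ne_zero_iff, hs]; exact hε.ne'
    have hsf := hsmall (by rwa [dist_zero_right, hs]) hne
    rw [dist_zero_right] at hsf
    calc ‖f (ε * exp (θ * I)) * (I * ε * exp (θ * I))‖
        = ‖(ε * exp (θ * I)) * f (ε * exp (θ * I))‖ := by
          simp only [norm_mul, norm_I, one_mul]; ring
      _ ≤ η' := hsf.le
  rw [dist_zero_right]
  calc _ ≤ η' * |b - a| := intervalIntegral.norm_integral_le_of_norm_le_const hbound
    _ < η := by
      rw [div_mul_eq_mul_div, div_lt_iff₀ (by positivity)]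
      nlinarith [abs_nonneg (b - a)]

theorem tendsto_gfun_zero {α₁ α₂ c : ℝ} (hc : c ≠ 0) :
    Tendsto (gfun α₁ α₂ c) (nhds 0) (nhds α₂) := by
  have hcont : ContinuousAt (gfun α₁ α₂ c) 0 :=
    ((continuous_const.mul continuous_id).add continuous_const).continuousAt.div
      (continuous_id.add continuous_const).continuousAt (by simpa using hc)
  simpa [ContinuousAt, gfun, hc] using hcont

theorem mul_utilde {α₁ α₂ c lam : ℝ} {s : ℂ} (hs : s ≠ 0) :
    s * utilde α₁ α₂ c lam s = s ^ gfun α₁ α₂ c s / (s ^ gfun α₁ α₂ c s + lam) := by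
  rw [utilde, cpow_sub _ _ hs, cpow_one]
  field_simp

theorem tendsto_mul_utilde_mul_exp {α₁ α₂ c lam : ℝ} (hα₂ : 0 < α₂) (hc : c ≠ 0)
    (hlam : lam ≠ 0) (t : ℝ) :
    Tendsto (fun s => s * (utilde α₁ α₂ c lam s * exp (s * t))) (nhdsWithin 0 {0}ᶜ)
      (nhds 0) := by
  have hpow : Tendsto (fun s => s ^ gfun α₁ α₂ c s) (nhdsWithin 0 {0}ᶜ) (nhds 0) :=
    (tendsto_cpow_of_tendsto_re_pos (tendsto_gfun_zero hc) (by simpa using hα₂)).mono_left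
      nhdsWithin_le_nhds
  have hexp : Tendsto (fun s : ℂ => exp (s * t)) (nhdsWithin 0 {0}ᶜ) (nhds 1) := by
    have hcont : Continuous fun s : ℂ => exp (s * t) := by fun_prop
    simpa using (hcont.tendsto 0).mono_left nhdsWithin_le_nhds
  have hlim := (hpow.div (hpow.add_const (lam : ℂ)) (by simpa using hlam)).mul hexp
  rw [zero_div, zero_mul] at hlim
  refine hlim.congr' (eventually_nhdsWithin_of_forall fun s (hs : s ≠ 0) => ?_)
  simp only [Pi.div_apply]
  rw [← mul_assoc, mul_utilde hs]

theorem small_circle_vanishes_general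
    (α₁ α₂ c lam t : ℝ) (h0 : 0 < α₁) (h12 : α₁ < α₂)
    (hc : 0 < c) (hlam : 0 < lam) :
    Tendsto (fun ε : ℝ => ∫ θ in (-Real.pi)..Real.pi,
        utilde α₁ α₂ c lam ((ε : ℂ) * Complex.exp ((θ : ℂ) * Complex.I)) *
          Complex.exp ((ε : ℂ) * Complex.exp ((θ : ℂ) * Complex.I) * (t : ℂ)) *
          (Complex.I * (ε : ℂ) * Complex.exp ((θ : ℂ) * Complex.I)))
      (nhdsWithin 0 (Set.Ioi 0)) (nhds 0) :=
  tendsto_intervalIntegral_circle_of_tendsto_mul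
    (tendsto_mul_utilde_mul_exp (h0.trans h12) hc.ne' hlam.ne' t) _ _

/-- The integral of `ũ(s)·e^{s t}` over the small circle of radius `ε` around the origin
vanishes as `ε → 0⁺`. -/
theorem small_circle_vanishes
    (α₁ α₂ c lam t : ℝ) (h0 : 0 < α₁) (h12 : α₁ < α₂) (h21 : α₂ < 1)
    (hc : 0 < c) (hlam : 0 < lam) (ht : 0 < t)
    (hnz : ∀ s : ℂ, s ≠ 0 → s ≠ -(c : ℂ) → s ^ gfun α₁ α₂ c s + (lam : ℂ) ≠ 0) :
    Tendsto (fun ε : ℝ => ∫ θ in (-Real.pi)..Real.pi,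
        utilde α₁ α₂ c lam ((ε : ℂ) * Complex.exp ((θ : ℂ) * Complex.I)) *
          Complex.exp ((ε : ℂ) * Complex.exp ((θ : ℂ) * Complex.I) * (t : ℂ)) *
          (Complex.I * (ε : ℂ) * Complex.exp ((θ : ℂ) * Complex.I)))
      (nhdsWithin 0 (Set.Ioi 0)) (nhds 0) :=
  small_circle_vanishes_general α₁ α₂ c lam t h0 h12 hc hlam
end

section
/- Boundary values of ũ on the branch cut: let ρ > 0 with ρ ≠ c, and assume 1 + λ ρ^{h(ρ)} e^{iπ h(ρ)} ≠ 0 and 1 + λ ρ^{h(ρ)} e^{−iπ h(ρ)} ≠ 0. Then lim_{δ→0⁺} ũ(−ρ + iδ) = −1 / (ρ(1 + λ ρ^{h(ρ)} e^{iπ h(ρ)})) and lim_{δ→0⁺} ũ(−ρ − iδ) = −1 / (ρ(1 + λ ρ^{h(ρ)} e^{−iπ h(ρ)})). -/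
/-!
Approaching `-ρ` from above (below), the principal logarithm tends to `L = log ρ ± iπ`, and `g`
is continuous at `-ρ` with `g(-ρ) = -h(ρ)`. Since `s ^ w = exp (w · Log s)`, both powers in `ũ`
converge, and the limit `exp (L (-h - 1)) / (exp (-L h) + λ)` simplifies to
`1 / (e^L (1 + λ e^{L h}))` with `e^L = -ρ` and `e^{L h} = ρ^h e^{± iπ h}`.
-/

open MeasureTheory Filter Set

open Complex Topology

theorem tendsto_cpow_of_tendsto_log {α : Type*} {l : Filter α} {f w : α → ℂ} {L w₀ : ℂ}
    (hf : ∀ᶠ x in l, f x ≠ 0) (hlog : Tendsto (fun x => log (f x)) l (𝓝 L))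
    (hw : Tendsto w l (𝓝 w₀)) :
    Tendsto (fun x => f x ^ w x) l (𝓝 (exp (L * w₀))) :=
  (hlog.mul hw).cexp.congr' (hf.mono fun _ hx => (cpow_def_of_ne_zero hx _).symm)

theorem tendsto_add_mul_I_nhdsWithin_im_pos {z : ℂ} (hz : z.im = 0) :
    Tendsto (fun δ : ℝ => z + δ * I) (𝓝[>] 0) (𝓝[{w | 0 < w.im}] z) := by
  refine tendsto_nhdsWithin_of_tendsto_nhds_of_eventually_within _ ?_ ?_
  · simpa using ((by fun_prop : Continuous fun δ : ℝ => z + δ * I).tendsto 0).mono_left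
      nhdsWithin_le_nhds
  · filter_upwards [self_mem_nhdsWithin] with δ hδ
    simpa [hz] using hδ

theorem tendsto_sub_mul_I_nhdsWithin_im_neg {z : ℂ} (hz : z.im = 0) :
    Tendsto (fun δ : ℝ => z - δ * I) (𝓝[>] 0) (𝓝[{w | w.im < 0}] z) := by
  refine tendsto_nhdsWithin_of_tendsto_nhds_of_eventually_within _ ?_ ?_
  · simpa using ((by fun_prop : Continuous fun δ : ℝ => z - δ * I).tendsto 0).mono_left
      nhdsWithin_le_nhds
  · filter_upwards [self_mem_nhdsWithin] with δ hδ
    simpa [hz] using hδ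

theorem exp_mul_neg_add_ne_zero {L w lam : ℂ} (hnz : 1 + lam * exp (L * w) ≠ 0) :
    exp (L * -w) + lam ≠ 0 := by
  have hP := exp_ne_zero (L * w)
  rw [mul_neg, exp_neg]
  contrapose! hnz
  field_simp at hnz
  linear_combination hnz

theorem exp_mul_neg_sub_one_div {L w lam : ℂ} (hnz : 1 + lam * exp (L * w) ≠ 0) :
    exp (L * (-w - 1)) / (exp (L * -w) + lam) = 1 / (exp L * (1 + lam * exp (L * w))) := by
  have hD := exp_mul_neg_add_ne_zero hnz
  rw [mul_neg, exp_neg] at hD ⊢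
  rw [mul_sub, mul_neg, mul_one, sub_eq_add_neg, exp_add, exp_neg, exp_neg]
  field_simp

theorem exp_log_add_mul_ofReal {ρ : ℝ} (hρ : 0 < ρ) (ε : ℂ) (x : ℝ) :
    exp ((Real.log ρ + ε) * x) = ((ρ ^ x : ℝ) : ℂ) * exp (ε * x) := by
  rw [add_mul, exp_add, Real.rpow_def_of_pos hρ, ofReal_exp, ofReal_mul]

theorem exp_log_add_of_exp_eq_neg_one {ρ : ℝ} (hρ : 0 < ρ) {ε : ℂ} (hε : exp ε = -1) :
    exp (Real.log ρ + ε) = -ρ := by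
  rw [exp_add, ← ofReal_exp, Real.exp_log hρ, hε, mul_neg_one]

section

variable {α₁ α₂ c : ℝ} (lam : ℝ) {ρ : ℝ}

theorem continuousAt_gfun {s : ℂ} (hs : s + c ≠ 0) : ContinuousAt (gfun α₁ α₂ c) s :=
  ContinuousAt.div (by fun_prop) (by fun_prop) hs

theorem gfun_neg_ofReal (hρc : ρ ≠ c) : gfun α₁ α₂ c (-ρ) = -hfun α₁ α₂ c ρ := by
  have : (c : ℂ) - ρ ≠ 0 := sub_ne_zero.mpr (by exact_mod_cast hρc.symm)
  unfold gfun hfun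
  push_cast
  rw [neg_add_eq_sub, ← neg_div, div_eq_div_iff this this]
  ring

theorem tendsto_utilde_of_tendsto_log {α : Type*} {l : Filter α} {f : α → ℂ} {s₀ L : ℂ}
    (hs₀ : s₀ + c ≠ 0) (hf : Tendsto f l (𝓝 s₀)) (hf0 : ∀ᶠ x in l, f x ≠ 0)
    (hlog : Tendsto (fun x => log (f x)) l (𝓝 L))
    (hD : exp (L * gfun α₁ α₂ c s₀) + lam ≠ 0) :
    Tendsto (fun x => utilde α₁ α₂ c lam (f x)) l
      (𝓝 (exp (L * (gfun α₁ α₂ c s₀ - 1)) / (exp (L * gfun α₁ α₂ c s₀) + lam))) := by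
  have hg := (continuousAt_gfun (α₁ := α₁) (α₂ := α₂) hs₀).tendsto.comp hf
  exact (tendsto_cpow_of_tendsto_log hf0 hlog (hg.sub_const 1)).div
    ((tendsto_cpow_of_tendsto_log hf0 hlog hg).add_const _) hD

theorem tendsto_utilde_of_tendsto_log_neg_ofReal (hρ : 0 < ρ) (hρc : ρ ≠ c) {ε : ℂ}
    (hε : exp ε = -1) {α : Type*} {l : Filter α} {f : α → ℂ} (hf : Tendsto f l (𝓝 (-ρ)))
    (hf0 : ∀ᶠ x in l, f x ≠ 0) (hlog : Tendsto (fun x => log (f x)) l (𝓝 (Real.log ρ + ε)))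
    (hnz : 1 + lam * ((ρ ^ hfun α₁ α₂ c ρ : ℝ) : ℂ) * exp (ε * hfun α₁ α₂ c ρ) ≠ 0) :
    Tendsto (fun x => utilde α₁ α₂ c lam (f x)) l
      (𝓝 (-1 / (ρ * (1 + lam * ((ρ ^ hfun α₁ α₂ c ρ : ℝ) : ℂ) *
        exp (ε * hfun α₁ α₂ c ρ))))) := by
  have hcρ : -(ρ : ℂ) + c ≠ 0 := by
    rw [neg_add_eq_sub, sub_ne_zero]; exact_mod_cast hρc.symm
  rw [mul_assoc, ← exp_log_add_mul_ofReal hρ] at hnz ⊢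
  have key := tendsto_utilde_of_tendsto_log lam hcρ hf hf0 hlog
    (by rw [gfun_neg_ofReal hρc]; exact exp_mul_neg_add_ne_zero hnz)
  rwa [gfun_neg_ofReal hρc, exp_mul_neg_sub_one_div hnz, exp_log_add_of_exp_eq_neg_one hρ hε,
    neg_mul, div_neg, ← neg_div] at key

theorem tendsto_utilde_neg_ofReal_add_mul_I (hρ : 0 < ρ) (hρc : ρ ≠ c)
    (hnz : 1 + lam * ((ρ ^ hfun α₁ α₂ c ρ : ℝ) : ℂ) * exp (Real.pi * hfun α₁ α₂ c ρ * I) ≠ 0) :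
    Tendsto (fun δ : ℝ => utilde α₁ α₂ c lam (-ρ + δ * I)) (𝓝[>] 0)
      (𝓝 (-1 / (ρ * (1 + lam * ((ρ ^ hfun α₁ α₂ c ρ : ℝ) : ℂ) *
        exp (Real.pi * hfun α₁ α₂ c ρ * I))))) := by
  have hpath := tendsto_add_mul_I_nhdsWithin_im_pos (z := -ρ) (by simp)
  have hlog := (tendsto_log_nhdsWithin_im_nonneg_of_re_neg_of_im_zero (z := -ρ) (by simp [hρ])
    (by simp)).comp (hpath.mono_right (nhdsWithin_mono _ fun _ hw => (mem_ofPred.mp hw).le))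
  rw [norm_neg, norm_real, Real.norm_of_nonneg hρ.le] at hlog
  rw [mul_right_comm (Real.pi : ℂ)] at hnz ⊢
  refine tendsto_utilde_of_tendsto_log_neg_ofReal lam hρ hρc exp_pi_mul_I
    (tendsto_nhds_of_tendsto_nhdsWithin hpath)
    (hpath.eventually (p := (· ≠ 0)) (eventually_nhdsWithin_of_forall fun _ hw =>
      ne_of_apply_ne im (mem_ofPred.mp hw).ne')) hlog hnz

theorem tendsto_utilde_neg_ofReal_sub_mul_I (hρ : 0 < ρ) (hρc : ρ ≠ c)
    (hnz : 1 + lam * ((ρ ^ hfun α₁ α₂ c ρ : ℝ) : ℂ) * exp (-(Real.pi * hfun α₁ α₂ c ρ * I)) ≠ 0) :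
    Tendsto (fun δ : ℝ => utilde α₁ α₂ c lam (-ρ - δ * I)) (𝓝[>] 0)
      (𝓝 (-1 / (ρ * (1 + lam * ((ρ ^ hfun α₁ α₂ c ρ : ℝ) : ℂ) *
        exp (-(Real.pi * hfun α₁ α₂ c ρ * I)))))) := by
  have hpath := tendsto_sub_mul_I_nhdsWithin_im_neg (z := -ρ) (by simp)
  have hlog := (tendsto_log_nhdsWithin_im_neg_of_re_neg_of_im_zero (z := -ρ) (by simp [hρ])
    (by simp)).comp hpath
  rw [norm_neg, norm_real, Real.norm_of_nonneg hρ.le, sub_eq_add_neg] at hlog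
  rw [mul_right_comm (Real.pi : ℂ), ← neg_mul] at hnz ⊢
  refine tendsto_utilde_of_tendsto_log_neg_ofReal lam hρ hρc exp_neg_pi_mul_I
    (tendsto_nhds_of_tendsto_nhdsWithin hpath)
    (hpath.eventually (p := (· ≠ 0)) (eventually_nhdsWithin_of_forall fun _ hw =>
      ne_of_apply_ne im (mem_ofPred.mp hw).ne)) hlog hnz

end

theorem boundary_values_on_cut_general
    (α₁ α₂ c lam : ℝ) (ρ : ℝ) (hρ : 0 < ρ) (hρc : ρ ≠ c)
    (hnzp : 1 + (lam : ℂ) * ((ρ ^ hfun α₁ α₂ c ρ : ℝ) : ℂ) *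
        Complex.exp ((Real.pi : ℂ) * (hfun α₁ α₂ c ρ : ℂ) * Complex.I) ≠ 0)
    (hnzm : 1 + (lam : ℂ) * ((ρ ^ hfun α₁ α₂ c ρ : ℝ) : ℂ) *
        Complex.exp (-((Real.pi : ℂ) * (hfun α₁ α₂ c ρ : ℂ) * Complex.I)) ≠ 0) :
    Tendsto (fun δ : ℝ => utilde α₁ α₂ c lam (-(ρ : ℂ) + (δ : ℂ) * Complex.I))
      (nhdsWithin 0 (Set.Ioi 0))
      (nhds (-1 / ((ρ : ℂ) * (1 + (lam : ℂ) * ((ρ ^ hfun α₁ α₂ c ρ : ℝ) : ℂ) *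
        Complex.exp ((Real.pi : ℂ) * (hfun α₁ α₂ c ρ : ℂ) * Complex.I))))) ∧
    Tendsto (fun δ : ℝ => utilde α₁ α₂ c lam (-(ρ : ℂ) - (δ : ℂ) * Complex.I))
      (nhdsWithin 0 (Set.Ioi 0))
      (nhds (-1 / ((ρ : ℂ) * (1 + (lam : ℂ) * ((ρ ^ hfun α₁ α₂ c ρ : ℝ) : ℂ) *
        Complex.exp (-((Real.pi : ℂ) * (hfun α₁ α₂ c ρ : ℂ) * Complex.I)))))) :=
  ⟨tendsto_utilde_neg_ofReal_add_mul_I lam hρ hρc hnzp,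
    tendsto_utilde_neg_ofReal_sub_mul_I lam hρ hρc hnzm⟩

/-- Boundary values of `ũ` on the branch cut: for `ρ > 0`, `ρ ≠ c`,
`ũ(-ρ ± iδ) → -1/(ρ(1 + λ ρ^{h(ρ)} e^{±iπ h(ρ)}))` as `δ → 0⁺`. -/
theorem boundary_values_on_cut
    (α₁ α₂ c lam : ℝ) (h0 : 0 < α₁) (h12 : α₁ < α₂) (h21 : α₂ < 1)
    (hc : 0 < c) (hlam : 0 < lam) (ρ : ℝ) (hρ : 0 < ρ) (hρc : ρ ≠ c)
    (hnzp : 1 + (lam : ℂ) * ((ρ ^ hfun α₁ α₂ c ρ : ℝ) : ℂ) *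
        Complex.exp ((Real.pi : ℂ) * (hfun α₁ α₂ c ρ : ℂ) * Complex.I) ≠ 0)
    (hnzm : 1 + (lam : ℂ) * ((ρ ^ hfun α₁ α₂ c ρ : ℝ) : ℂ) *
        Complex.exp (-((Real.pi : ℂ) * (hfun α₁ α₂ c ρ : ℂ) * Complex.I)) ≠ 0) :
    Tendsto (fun δ : ℝ => utilde α₁ α₂ c lam (-(ρ : ℂ) + (δ : ℂ) * Complex.I))
      (nhdsWithin 0 (Set.Ioi 0))
      (nhds (-1 / ((ρ : ℂ) * (1 + (lam : ℂ) * ((ρ ^ hfun α₁ α₂ c ρ : ℝ) : ℂ) *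
        Complex.exp ((Real.pi : ℂ) * (hfun α₁ α₂ c ρ : ℂ) * Complex.I))))) ∧
    Tendsto (fun δ : ℝ => utilde α₁ α₂ c lam (-(ρ : ℂ) - (δ : ℂ) * Complex.I))
      (nhdsWithin 0 (Set.Ioi 0))
      (nhds (-1 / ((ρ : ℂ) * (1 + (lam : ℂ) * ((ρ ^ hfun α₁ α₂ c ρ : ℝ) : ℂ) *
        Complex.exp (-((Real.pi : ℂ) * (hfun α₁ α₂ c ρ : ℂ) * Complex.I)))))) :=
  boundary_values_on_cut_general α₁ α₂ c lam ρ hρ hρc hnzp hnzm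
end

section
/- Assume in addition c > 1. Then the boundary integrand has a finite left-sided limit at ρ = c: lim_{ρ→c⁻} e^{−ρ t} / (−ρ(1 + λ ρ^{h(ρ)} e^{iπ h(ρ)})) = −e^{−c t}/c. -/
open MeasureTheory Filter Set

/-!
As `ρ → c⁻`, the exponent `h(ρ)` tends to `-∞`: its numerator tends to `(α₁ - α₂) c < 0` while
its denominator `c - ρ` decreases to `0`. Since `ρ → c > 1`, `ρ ^ h(ρ) = exp (h(ρ) log ρ) → 0`,
and `exp (iπ h(ρ))` has modulus one, so the bracket in the denominator tends to `1` and the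
integrand to `e^{-ct} / (-c)`.
-/

open Topology Complex

theorem tendsto_const_sub_nhdsLT (c : ℝ) : Tendsto (fun ρ : ℝ => c - ρ) (𝓝[<] c) (𝓝[>] 0) :=
  tendsto_nhdsWithin_of_tendsto_nhds_of_eventually_within _
    (((continuous_const.sub continuous_id).tendsto' c 0 (sub_self c)).mono_left nhdsWithin_le_nhds)
    (eventually_nhdsWithin_of_forall fun _ hρ => mem_Ioi.mpr (sub_pos.mpr hρ))

theorem tendsto_hfun_nhdsLT_atBot {α₁ α₂ c : ℝ} (h12 : α₁ < α₂) (hc : 0 < c) :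
    Tendsto (hfun α₁ α₂ c) (𝓝[<] c) atBot := by
  have hnum : Tendsto (fun ρ : ℝ => α₁ * ρ - α₂ * c) (𝓝[<] c) (𝓝 (α₁ * c - α₂ * c)) :=
    ((continuous_const.mul continuous_id).sub continuous_const).continuousAt.tendsto.mono_left
      nhdsWithin_le_nhds
  exact (hnum.neg_mul_atTop (by nlinarith) (tendsto_inv_nhdsGT_zero.comp
    (tendsto_const_sub_nhdsLT c))).congr fun ρ => (div_eq_mul_inv _ _).symm

theorem Filter.Tendsto.rpow_nhds_zero_of_atBot {ι : Type*} {l : Filter ι} {x y : ι → ℝ} {a : ℝ}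
    (hx : Tendsto x l (𝓝 a)) (ha : 1 < a) (hy : Tendsto y l atBot) :
    Tendsto (fun i => x i ^ y i) l (𝓝 0) := by
  have hlog : Tendsto (fun i => y i * Real.log (x i)) l atBot :=
    hy.atBot_mul_pos (Real.log_pos ha) ((Real.continuousAt_log (by positivity)).tendsto.comp hx)
  refine (Real.tendsto_exp_atBot.comp hlog).congr' ?_
  filter_upwards [hx.eventually (lt_mem_nhds (zero_lt_one.trans ha))] with i hi
  rw [Function.comp_apply, Real.rpow_def_of_pos hi, mul_comm]

theorem Filter.Tendsto.mul_exp_ofReal_mul_I {ι : Type*} {l : Filter ι} {z : ι → ℂ} (θ : ι → ℝ)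
    (hz : Tendsto z l (𝓝 0)) : Tendsto (fun i => z i * Complex.exp ((θ i : ℂ) * I)) l (𝓝 0) := by
  rw [tendsto_zero_iff_norm_tendsto_zero] at hz ⊢
  simpa only [norm_mul, norm_exp_ofReal_mul_I, mul_one] using hz

theorem boundary_integrand_left_limit_general
    (α₁ α₂ c lam t : ℝ) (h12 : α₁ < α₂) (hc1 : 1 < c) :
    Tendsto (fun ρ : ℝ => ((Real.exp (-ρ * t) : ℝ) : ℂ) /
        (-(ρ : ℂ) * (1 + (lam : ℂ) * ((ρ ^ hfun α₁ α₂ c ρ : ℝ) : ℂ) *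
          Complex.exp ((Real.pi : ℂ) * (hfun α₁ α₂ c ρ : ℂ) * Complex.I))))
      (nhdsWithin c (Set.Iio c))
      (nhds (-(((Real.exp (-c * t) : ℝ) : ℂ)) / (c : ℂ))) := by
  have hc : 0 < c := one_pos.trans hc1
  have hρ : Tendsto (fun ρ : ℝ => ρ) (𝓝[<] c) (𝓝 c) := nhdsWithin_le_nhds
  have hpow : Tendsto (fun ρ => ρ ^ hfun α₁ α₂ c ρ) (𝓝[<] c) (𝓝 0) :=
    hρ.rpow_nhds_zero_of_atBot hc1 (tendsto_hfun_nhdsLT_atBot h12 hc)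
  have hcorr : Tendsto (fun ρ : ℝ => (lam : ℂ) * ((ρ ^ hfun α₁ α₂ c ρ : ℝ) : ℂ) *
      exp ((Real.pi : ℂ) * (hfun α₁ α₂ c ρ : ℂ) * I)) (𝓝[<] c) (𝓝 0) := by
    have hsmall : Tendsto (fun ρ => (lam : ℂ) * ((ρ ^ hfun α₁ α₂ c ρ : ℝ) : ℂ)) (𝓝[<] c) (𝓝 0) := by
      simpa using ((continuous_ofReal.tendsto 0).comp hpow).const_mul (lam : ℂ)
    simpa only [ofReal_mul] using hsmall.mul_exp_ofReal_mul_I (fun ρ => Real.pi * hfun α₁ α₂ c ρ)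
  have hnum : Tendsto (fun ρ : ℝ => ((Real.exp (-ρ * t) : ℝ) : ℂ)) (𝓝[<] c)
      (𝓝 ((Real.exp (-c * t) : ℝ) : ℂ)) :=
    ((by fun_prop : Continuous fun ρ : ℝ => ((Real.exp (-ρ * t) : ℝ) : ℂ)).tendsto c).mono_left
      nhdsWithin_le_nhds
  have hden := ((continuous_ofReal.tendsto c).comp hρ).neg.mul
    ((tendsto_const_nhds (x := (1 : ℂ))).add hcorr)
  rw [show -((Real.exp (-c * t) : ℝ) : ℂ) / c = Real.exp (-c * t) / (-c * (1 + 0)) by ring]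
  exact hnum.div hden (by simpa using hc.ne')

/-- If `c > 1`, the boundary integrand has a finite left-sided limit at `ρ = c`:
`e^{-ρ t}/(-ρ(1 + λ ρ^{h(ρ)} e^{iπ h(ρ)})) → -e^{-c t}/c` as `ρ → c⁻`. -/
theorem boundary_integrand_left_limit
    (α₁ α₂ c lam t : ℝ) (h0 : 0 < α₁) (h12 : α₁ < α₂) (h21 : α₂ < 1)
    (hc : 0 < c) (hlam : 0 < lam) (ht : 0 < t) (hc1 : 1 < c) :
    Tendsto (fun ρ : ℝ => ((Real.exp (-ρ * t) : ℝ) : ℂ) /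
        (-(ρ : ℂ) * (1 + (lam : ℂ) * ((ρ ^ hfun α₁ α₂ c ρ : ℝ) : ℂ) *
          Complex.exp ((Real.pi : ℂ) * (hfun α₁ α₂ c ρ : ℂ) * Complex.I))))
      (nhdsWithin c (Set.Iio c))
      (nhds (-(((Real.exp (-c * t) : ℝ) : ℂ)) / (c : ℂ))) :=
  boundary_integrand_left_limit_general α₁ α₂ c lam t h12 hc1
end

section
/- Asymptotic behaviour at infinity: as ρ → ∞, the boundary integrand is asymptotically equivalent to −e^{−ρ t}/(ρ + λ e^{−iπ α₁} ρ^{1−α₁}); precisely, lim_{ρ→∞} (ρ + λ e^{−iπ α₁} ρ^{1−α₁}) / (ρ(1 + λ ρ^{h(ρ)} e^{iπ h(ρ)})) = 1. -/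
open MeasureTheory Filter Set

open Topology

/-! Since `h(ρ) → -α₁ < 0`, both `ρ^{h(ρ)}` and `ρ^{-α₁}` tend to `0` while the phases
converge; after cancelling the common factor `ρ`, numerator and denominator both tend to `1`. -/

theorem tendsto_hfun_atTop (α₁ α₂ c : ℝ) :
    Tendsto (hfun α₁ α₂ c) atTop (𝓝 (-α₁)) := by
  have hinv : Tendsto (fun ρ : ℝ => c / ρ) atTop (𝓝 0) :=
    tendsto_const_nhds.div_atTop tendsto_id
  have hlim : Tendsto (fun ρ : ℝ => (α₁ - α₂ * (c / ρ)) / (c / ρ - 1)) atTop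
      (𝓝 ((α₁ - α₂ * 0) / (0 - 1))) :=
    (tendsto_const_nhds.sub (hinv.const_mul α₂)).div (hinv.sub_const 1) (by norm_num)
  rw [show (α₁ - α₂ * 0) / (0 - 1) = -α₁ by ring] at hlim
  refine hlim.congr' ?_
  filter_upwards [eventually_gt_atTop (max c 0)] with ρ hρ
  have hρ0 : ρ ≠ 0 := (lt_of_le_of_lt (le_max_right c 0) hρ).ne'
  have hcρ : c - ρ ≠ 0 := sub_ne_zero.mpr (lt_of_le_of_lt (le_max_left c 0) hρ).ne
  rw [hfun]
  field_simp

theorem tendsto_rpow_atTop_of_tendsto_neg {f : ℝ → ℝ} {a : ℝ} (ha : a < 0)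
    (hf : Tendsto f atTop (𝓝 a)) : Tendsto (fun ρ => ρ ^ f ρ) atTop (𝓝 0) := by
  have hexp : Tendsto (fun ρ => Real.exp (Real.log ρ * f ρ)) atTop (𝓝 0) :=
    Real.tendsto_exp_atBot.comp (Real.tendsto_log_atTop.atTop_mul_neg ha hf)
  refine hexp.congr' ?_
  filter_upwards [eventually_gt_atTop 0] with ρ hρ
  rw [Real.rpow_def_of_pos hρ]

theorem tendsto_one_add_mul_ofReal_mul_nhds_one {r : ℝ → ℝ} {u : ℝ → ℂ} {v : ℂ}
    (hr : Tendsto r atTop (𝓝 0)) (hu : Tendsto u atTop (𝓝 v)) (z : ℂ) :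
    Tendsto (fun ρ => 1 + z * (r ρ : ℂ) * u ρ) atTop (𝓝 1) := by
  simpa using ((hr.ofReal.const_mul z).mul hu).const_add 1

theorem ofReal_add_mul_rpow_one_sub {ρ : ℝ} (hρ : 0 < ρ) (a : ℝ) (w : ℂ) :
    (ρ : ℂ) + w * ((ρ ^ (1 - a) : ℝ) : ℂ) = ρ * (1 + w * ((ρ ^ (-a) : ℝ) : ℂ)) := by
  rw [sub_eq_add_neg, Real.rpow_add hρ, Real.rpow_one]
  push_cast
  ring

theorem boundary_integrand_asymptotics_infinity_general
    (α₁ α₂ c lam : ℝ) (h0 : 0 < α₁) :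
    Tendsto (fun ρ : ℝ =>
        ((ρ : ℂ) + (lam : ℂ) * Complex.exp (-((Real.pi : ℂ) * (α₁ : ℂ) * Complex.I)) *
            ((ρ ^ (1 - α₁) : ℝ) : ℂ)) /
        ((ρ : ℂ) * (1 + (lam : ℂ) * ((ρ ^ hfun α₁ α₂ c ρ : ℝ) : ℂ) *
          Complex.exp ((Real.pi : ℂ) * (hfun α₁ α₂ c ρ : ℂ) * Complex.I))))
      atTop (nhds 1) := by
  have hh := tendsto_hfun_atTop α₁ α₂ c
  set w : ℂ := lam * Complex.exp (-((Real.pi : ℂ) * (α₁ : ℂ) * Complex.I))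
  have hnum : Tendsto (fun ρ : ℝ => 1 + w * ((ρ ^ (-α₁) : ℝ) : ℂ)) atTop (𝓝 1) := by
    simpa only [mul_one] using tendsto_one_add_mul_ofReal_mul_nhds_one
      (tendsto_rpow_neg_atTop h0) (tendsto_const_nhds (x := 1)) w
  have hden := tendsto_one_add_mul_ofReal_mul_nhds_one
    (tendsto_rpow_atTop_of_tendsto_neg (neg_lt_zero.mpr h0) hh)
    ((hh.ofReal.const_mul (Real.pi : ℂ)).mul_const Complex.I).cexp lam
  have hquot := hnum.div hden one_ne_zero
  rw [div_one] at hquot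
  refine hquot.congr' ?_
  filter_upwards [eventually_gt_atTop 0] with ρ hρ
  rw [ofReal_add_mul_rpow_one_sub hρ, mul_div_mul_left _ _ (Complex.ofReal_ne_zero.mpr hρ.ne')]
  rfl

/-- Asymptotic behaviour at infinity: the boundary integrand is asymptotically equivalent to
`-e^{-ρt}/(ρ + λ e^{-iπ α₁} ρ^{1-α₁})` as `ρ → ∞`; precisely,
`(ρ + λ e^{-iπ α₁} ρ^{1-α₁}) / (ρ(1 + λ ρ^{h(ρ)} e^{iπ h(ρ)})) → 1`. -/
theorem boundary_integrand_asymptotics_infinity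
    (α₁ α₂ c lam t : ℝ) (h0 : 0 < α₁) (h12 : α₁ < α₂) (h21 : α₂ < 1)
    (hc : 0 < c) (hlam : 0 < lam) (ht : 0 < t) :
    Tendsto (fun ρ : ℝ =>
        ((ρ : ℂ) + (lam : ℂ) * Complex.exp (-((Real.pi : ℂ) * (α₁ : ℂ) * Complex.I)) *
            ((ρ ^ (1 - α₁) : ℝ) : ℂ)) /
        ((ρ : ℂ) * (1 + (lam : ℂ) * ((ρ ^ hfun α₁ α₂ c ρ : ℝ) : ℂ) *
          Complex.exp ((Real.pi : ℂ) * (hfun α₁ α₂ c ρ : ℂ) * Complex.I))))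
      atTop (nhds 1) :=
  boundary_integrand_asymptotics_infinity_general α₁ α₂ c lam h0
end
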